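/- arXiv:2508.12258 — 8 statements merged into one kernel-verified Lean document; each statement's English description precedes it below -/
import Mathlib

section
/- Let $A$ and $B$ be $p \times p$ real positive semidefinite matrices with unit diagonals. Then $\lambda_{\min}(A \odot B) \geq \lambda_{\min}(A) + \lambda_{\min}(B) - \lambda_{\min}(A)\lambda_{\min}(B)$. -/
/-- The smallest eigenvalue of a matrix, defined as the infimum of its eigenvalues. -/
noncomputable def lambdaMin {p : ℕ} (A : Matrix (Fin p) (Fin p) ℝ) : ℝ :=
  sInf {μ : ℝ | ∃ v : Fin p → ℝ, v ≠ 0 ∧ A.mulVec v = μ • v}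

/-!
Shift both matrices down by their smallest eigenvalues: `A - λ(A) • 1` and `B - λ(B) • 1` are
positive semidefinite, hence so is their Hadamard product by the Schur product theorem. Because the
diagonals are `1`, that product is `A ⊙ B - (λ(A) + λ(B) - λ(A) λ(B)) • 1`, and a positive
semidefinite shift `M - c • 1` bounds every eigenvalue of `M` below by `c`.
-/

open Matrix

namespace Matrix

variable {n R : Type*} [DecidableEq n]

theorem hadamard_sub_smul_one [CommRing R] {A B : Matrix n n R} (hA : ∀ i, A i i = 1)
    (hB : ∀ i, B i i = 1) (a b : R) : (A - a • 1) ⊙ (B - b • 1) = A ⊙ B - (a + b - a * b) • 1 := by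
  ext i j
  rcases eq_or_ne i j with rfl | hij
  · simp [hA i, hB i]
    ring
  · simp [hij]

variable [Fintype n]

theorem setOf_eigenvalue_eq_spectrum (M : Matrix n n ℝ) :
    {μ : ℝ | ∃ v : n → ℝ, v ≠ 0 ∧ M *ᵥ v = μ • v} = spectrum ℝ M := by
  ext μ
  rw [← AlgEquiv.spectrum_eq Matrix.toLinAlgEquiv', ← Module.End.hasEigenvalue_iff_mem_spectrum,
    Module.End.hasEigenvalue_iff]
  simp [Submodule.ne_bot_iff, and_comm]

theorem IsHermitian.posSemidef_sub_smul_one_iff {M : Matrix n n ℝ} (hM : M.IsHermitian) (c : ℝ) :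
    (M - c • 1).PosSemidef ↔ ∀ μ ∈ spectrum ℝ M, c ≤ μ := by
  have hMc : (M - c • 1).IsHermitian := hM.sub (by simp [IsHermitian])
  rw [posSemidef_iff_isHermitian_and_spectrum_nonneg, and_iff_right hMc,
    ← Algebra.algebraMap_eq_smul_one, ← spectrum.sub_singleton_eq]
  simp [Set.subset_def]

end Matrix

section lambdaMin

variable {p : ℕ} {M : Matrix (Fin p) (Fin p) ℝ}

variable (M) in
theorem lambdaMin_eq_sInf_spectrum : lambdaMin M = sInf (spectrum ℝ M) := by
  rw [lambdaMin, ← setOf_eigenvalue_eq_spectrum]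

theorem Matrix.IsHermitian.posSemidef_sub_lambdaMin_smul_one (hM : M.IsHermitian) :
    (M - lambdaMin M • 1).PosSemidef := by
  rw [hM.posSemidef_sub_smul_one_iff, lambdaMin_eq_sInf_spectrum]
  exact fun μ hμ => csInf_le finite_real_spectrum.bddBelow hμ

theorem Matrix.IsHermitian.le_lambdaMin_of_posSemidef_sub_smul_one (hp : 0 < p)
    (hM : M.IsHermitian) {c : ℝ} (hc : (M - c • 1).PosSemidef) : c ≤ lambdaMin M := by
  have : Nonempty (Fin p) := ⟨⟨0, hp⟩⟩
  rw [lambdaMin_eq_sInf_spectrum, hM.spectrum_real_eq_range_eigenvalues]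
  rw [hM.posSemidef_sub_smul_one_iff, hM.spectrum_real_eq_range_eigenvalues] at hc
  exact le_csInf (Set.range_nonempty _) hc

end lambdaMin

theorem stmt_1 {p : ℕ} (hp : 0 < p) (A B : Matrix (Fin p) (Fin p) ℝ)
    (hA : A.PosSemidef) (hB : B.PosSemidef)
    (hAd : ∀ i, A i i = 1) (hBd : ∀ i, B i i = 1) :
    lambdaMin A + lambdaMin B - lambdaMin A * lambdaMin B
      ≤ lambdaMin (Matrix.hadamard A B) := by
  have hshift := hA.isHermitian.posSemidef_sub_lambdaMin_smul_one.hadamard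
    hB.isHermitian.posSemidef_sub_lambdaMin_smul_one
  rw [hadamard_sub_smul_one hAd hBd] at hshift
  exact (hA.hadamard hB).isHermitian.le_lambdaMin_of_posSemidef_sub_smul_one hp hshift
end

section
/- Fix $\gamma > 0$. Let $\hat{C}$ be a $p\times p$ symmetric matrix with unit diagonal, let $H$ be a $p\times p$ diagonal matrix, and let $M$ be a $p\times p$ symmetric matrix with zero diagonal. Then $|\operatorname{tr}(\hat{C} H M)| \leq \frac{\gamma}{2} \|\hat{C}-I_p\|_{op,\infty} \operatorname{tr}(H^2) + \frac{1}{2\gamma} \|\hat{C}-I_p\|_{\infty} \operatorname{tr}(M^2)$, where $\|X\|_{op,\infty} = \max_i \sum_j |X_{ij}|$ and $\|X\|_{\infty} = \max_{i,j} |X_{ij}|$. -/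
/-- The max-row-sum norm `‖X‖_{op,∞} = max_i ∑_j |X i j|`. -/
noncomputable def rowSumNorm {p : ℕ} (X : Matrix (Fin p) (Fin p) ℝ) : ℝ :=
  ⨆ i, ∑ j, |X i j|

/-- The entrywise max norm `‖X‖_∞ = max_{i,j} |X i j|`. -/
noncomputable def entryMaxNorm {p : ℕ} (X : Matrix (Fin p) (Fin p) ℝ) : ℝ :=
  ⨆ i, ⨆ j, |X i j|

/-!
Write `H = diagonal d`. Since `M` has zero diagonal, `tr (H M) = 0`, so `tr (C H M) = tr (A H M)`
with `A = C - 1`, i.e. `∑ᵢ ∑ⱼ Aᵢⱼ dⱼ Mⱼᵢ`. Bounding each term by AM-GM,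
`|dⱼ Mⱼᵢ| ≤ γ/2 dⱼ² + Mⱼᵢ²/(2γ)`, the first part is controlled by the column sums of `|A|`,
which equal its row sums as `A` is symmetric, and the second by the largest entry of `|A|`.
-/

open Matrix Finset

lemma mul_le_half_mul_sq_add {γ : ℝ} (hγ : 0 < γ) (a b : ℝ) :
    a * b ≤ γ / 2 * a ^ 2 + 1 / (2 * γ) * b ^ 2 := by
  have h : γ / 2 * a ^ 2 + 1 / (2 * γ) * b ^ 2 - a * b = (γ * a - b) ^ 2 / (2 * γ) := by
    field_simp
    ring
  linarith [show 0 ≤ (γ * a - b) ^ 2 / (2 * γ) by positivity]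

section Trace

variable {n R : Type*} [Fintype n]

lemma Matrix.IsSymm.trace_mul_self [CommSemiring R] {M : Matrix n n R} (hM : M.IsSymm) :
    trace (M * M) = ∑ i, ∑ j, M j i ^ 2 := by
  refine sum_congr rfl fun i _ => sum_congr rfl fun j _ => ?_
  dsimp only
  rw [sq, hM.apply i j]

variable [DecidableEq n]

lemma trace_mul_diagonal_mul [CommSemiring R] (A M : Matrix n n R) (d : n → R) :
    trace (A * diagonal d * M) = ∑ i, ∑ j, A i j * d j * M j i := by
  refine sum_congr rfl fun i _ => ?_
  rw [diag_apply, mul_apply]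
  simp only [mul_diagonal]

lemma trace_diagonal_mul_of_diag_eq_zero [CommSemiring R] {M : Matrix n n R} (d : n → R)
    (hM : ∀ i, M i i = 0) : trace (diagonal d * M) = 0 := by
  simp [trace, diagonal_mul, hM]

lemma trace_diagonal_mul_diagonal [CommSemiring R] (d : n → R) :
    trace (diagonal d * diagonal d) = ∑ j, d j ^ 2 := by
  simp [diagonal_mul_diagonal, sq]

lemma abs_trace_mul_diagonal_mul_le {γ : ℝ} (hγ : 0 < γ) (A M : Matrix n n ℝ) (d : n → ℝ) :
    |trace (A * diagonal d * M)| ≤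
      γ / 2 * ∑ i, ∑ j, |A i j| * d j ^ 2 + 1 / (2 * γ) * ∑ i, ∑ j, |A i j| * M j i ^ 2 := by
  rw [trace_mul_diagonal_mul, mul_sum, mul_sum, ← sum_add_distrib]
  refine (abs_sum_le_sum_abs _ _).trans (sum_le_sum fun i _ => ?_)
  rw [mul_sum, mul_sum, ← sum_add_distrib]
  refine (abs_sum_le_sum_abs _ _).trans (sum_le_sum fun j _ => ?_)
  have hamgm := mul_le_half_mul_sq_add hγ |d j| |M j i|
  rw [sq_abs, sq_abs] at hamgm
  calc |A i j * d j * M j i| = |A i j| * (|d j| * |M j i|) := by rw [abs_mul, abs_mul, mul_assoc]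
    _ ≤ |A i j| * (γ / 2 * d j ^ 2 + 1 / (2 * γ) * M j i ^ 2) := by gcongr
    _ = _ := by ring

end Trace

section Norms

variable {p : ℕ}

lemma sum_abs_le_rowSumNorm (A : Matrix (Fin p) (Fin p) ℝ) (i : Fin p) :
    ∑ j, |A i j| ≤ rowSumNorm A :=
  le_ciSup (f := fun i => ∑ j, |A i j|) (Set.finite_range _).bddAbove i

lemma abs_le_entryMaxNorm (A : Matrix (Fin p) (Fin p) ℝ) (i j : Fin p) :
    |A i j| ≤ entryMaxNorm A :=
  (le_ciSup (f := fun j => |A i j|) (Set.finite_range _).bddAbove j).trans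
    (le_ciSup (f := fun i => ⨆ j, |A i j|) (Set.finite_range _).bddAbove i)

lemma Matrix.IsSymm.sum_abs_mul_le_rowSumNorm_mul {A : Matrix (Fin p) (Fin p) ℝ} (hA : A.IsSymm)
    {x : Fin p → ℝ} (hx : ∀ j, 0 ≤ x j) :
    ∑ i, ∑ j, |A i j| * x j ≤ rowSumNorm A * ∑ j, x j := by
  rw [sum_comm, mul_sum]
  refine sum_le_sum fun j _ => ?_
  rw [← sum_mul]
  refine mul_le_mul_of_nonneg_right ?_ (hx j)
  calc ∑ i, |A i j| = ∑ i, |A j i| := sum_congr rfl fun i _ => by rw [hA.apply j i]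
    _ ≤ rowSumNorm A := sum_abs_le_rowSumNorm A j

lemma sum_abs_mul_le_entryMaxNorm_mul (A : Matrix (Fin p) (Fin p) ℝ)
    {x : Fin p → Fin p → ℝ} (hx : ∀ i j, 0 ≤ x i j) :
    ∑ i, ∑ j, |A i j| * x i j ≤ entryMaxNorm A * ∑ i, ∑ j, x i j := by
  simp only [mul_sum]
  exact sum_le_sum fun i _ => sum_le_sum fun j _ =>
    mul_le_mul_of_nonneg_right (abs_le_entryMaxNorm A i j) (hx i j)

end Norms

theorem stmt_4_general {p : ℕ} (γ : ℝ) (hγ : 0 < γ)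
    (C H M : Matrix (Fin p) (Fin p) ℝ)
    (hC : C.IsSymm)
    (hH : ∀ i j, i ≠ j → H i j = 0)
    (hM : M.IsSymm) (hMd : ∀ i, M i i = 0) :
    |Matrix.trace (C * H * M)| ≤
      γ / 2 * rowSumNorm (C - 1) * Matrix.trace (H * H)
        + 1 / (2 * γ) * entryMaxNorm (C - 1) * Matrix.trace (M * M) := by
  obtain ⟨d, rfl⟩ : ∃ d, H = diagonal d :=
    ⟨H.diag, ((isDiag_iff_diagonal_diag H).1 fun i j hij => hH i j hij).symm⟩
  have hA : (C - 1).IsSymm := hC.sub isSymm_one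
  have htrace : trace (C * diagonal d * M) = trace ((C - 1) * diagonal d * M) := by
    rw [sub_mul, sub_mul, trace_sub, one_mul, trace_diagonal_mul_of_diag_eq_zero d hMd, sub_zero]
  rw [htrace, trace_diagonal_mul_diagonal, hM.trace_mul_self, mul_assoc (γ / 2),
    mul_assoc (1 / (2 * γ))]
  refine (abs_trace_mul_diagonal_mul_le hγ _ M d).trans (add_le_add ?_ ?_)
  · exact mul_le_mul_of_nonneg_left
      (hA.sum_abs_mul_le_rowSumNorm_mul fun j => sq_nonneg _) (by positivity)
  · exact mul_le_mul_of_nonneg_left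
      (sum_abs_mul_le_entryMaxNorm_mul _ fun i j => sq_nonneg _) (by positivity)

theorem stmt_4 {p : ℕ} (hp : 0 < p) (γ : ℝ) (hγ : 0 < γ)
    (C H M : Matrix (Fin p) (Fin p) ℝ)
    (hC : C.IsSymm) (hCd : ∀ i, C i i = 1)
    (hH : ∀ i j, i ≠ j → H i j = 0)
    (hM : M.IsSymm) (hMd : ∀ i, M i i = 0) :
    |Matrix.trace (C * H * M)| ≤
      γ / 2 * rowSumNorm (C - 1) * Matrix.trace (H * H)
        + 1 / (2 * γ) * entryMaxNorm (C - 1) * Matrix.trace (M * M) :=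
  stmt_4_general γ hγ C H M hC hH hM hMd
end

section
/- Let $A$ be a $p\times p$ positive semidefinite matrix such that $\mu(A) := \min_{y \in [0,\infty)^p \setminus \{0\}} \frac{y^\top A y}{y^\top y} > 0$. If $D$ is a diagonal matrix with positive entries satisfying $DADe = e$ (where $e = (1,\ldots,1)^\top$), then $\operatorname{tr}(D^2) \leq p/\mu(A)$. -/
/-!
At the scaling vector `d` each row of the quadratic form contributes `dᵢ (A d)ᵢ = 1`, so
`dᵀ A d = p`. Since `d` is nonnegative and nonzero, the definition of `μ(A)` as an infimum of
Rayleigh quotients gives `μ(A) ∑ dᵢ² ≤ dᵀ A d = p`.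
-/

/-- The minimum of the Rayleigh quotient of `A` over nonzero nonnegative vectors. -/
noncomputable def muNonneg {p : ℕ} (A : Matrix (Fin p) (Fin p) ℝ) : ℝ :=
  sInf {r : ℝ | ∃ y : Fin p → ℝ, (∀ i, 0 ≤ y i) ∧ y ≠ 0 ∧
    r = (∑ i, ∑ j, y i * A i j * y j) / (∑ i, (y i) ^ 2)}

open Finset

theorem bddBelow_of_muNonneg_pos {p : ℕ} {A : Matrix (Fin p) (Fin p) ℝ} (hμ : 0 < muNonneg A) :
    BddBelow {r : ℝ | ∃ y : Fin p → ℝ, (∀ i, 0 ≤ y i) ∧ y ≠ 0 ∧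
      r = (∑ i, ∑ j, y i * A i j * y j) / (∑ i, (y i) ^ 2)} := by
  by_contra h
  -- an unbounded set has `sInf = 0` in `ℝ`
  exact hμ.ne' (Real.sInf_of_not_bddBelow h)

theorem muNonneg_mul_sum_sq_le {p : ℕ} {A : Matrix (Fin p) (Fin p) ℝ} (hμ : 0 < muNonneg A)
    {y : Fin p → ℝ} (hy : ∀ i, 0 ≤ y i) :
    muNonneg A * ∑ i, (y i) ^ 2 ≤ ∑ i, ∑ j, y i * A i j * y j := by
  by_cases hy0 : y = 0
  · simp [hy0]
  have hpos : 0 < ∑ i, (y i) ^ 2 := by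
    obtain ⟨i, hi⟩ := Function.ne_iff.mp hy0
    exact lt_of_lt_of_le (pow_pos ((hy i).lt_of_ne' hi) 2)
      (single_le_sum (fun j _ => sq_nonneg (y j)) (mem_univ i))
  rw [← le_div_iff₀ hpos]
  exact csInf_le (bddBelow_of_muNonneg_pos hμ) ⟨y, hy, hy0, rfl⟩

theorem quadForm_eq_card_of_scaling {p : ℕ} {A : Matrix (Fin p) (Fin p) ℝ} {d : Fin p → ℝ}
    (hscal : ∀ i, d i * ∑ j, A i j * d j = 1) :
    ∑ i, ∑ j, d i * A i j * d j = p := by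
  have hrow : ∀ i, ∑ j, d i * A i j * d j = 1 := fun i => by
    simp only [← hscal i, mul_sum, mul_assoc]
  simp [hrow]

theorem stmt_5_general {p : ℕ} (A : Matrix (Fin p) (Fin p) ℝ)
    (hμ : 0 < muNonneg A)
    (d : Fin p → ℝ) (hd : ∀ i, 0 < d i)
    (hscal : ∀ i, d i * ∑ j, A i j * d j = 1) :
    ∑ i, (d i) ^ 2 ≤ p / muNonneg A := by
  rw [le_div_iff₀ hμ, mul_comm, ← quadForm_eq_card_of_scaling hscal]
  exact muNonneg_mul_sum_sq_le hμ fun i => (hd i).le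

theorem stmt_5 {p : ℕ} (hp : 0 < p) (A : Matrix (Fin p) (Fin p) ℝ)
    (hA : A.PosSemidef) (hμ : 0 < muNonneg A)
    (d : Fin p → ℝ) (hd : ∀ i, 0 < d i)
    (hscal : ∀ i, d i * ∑ j, A i j * d j = 1) :
    ∑ i, (d i) ^ 2 ≤ p / muNonneg A :=
  stmt_5_general A hμ d hd hscal
end

section
/- Let $\hat{C}$ be a $p\times p$ positive definite matrix with unit diagonal, $R$ a $p\times p$ positive definite matrix with unit diagonal, and $\alpha < 1$. Set $A = (R \odot \hat{C})/(1-\alpha)$. If $D$ is a diagonal matrix with positive entries satisfying $DADe = e$, then every diagonal entry $D_{ii}$ satisfies $\frac{\sqrt{(1-\alpha)\lambda_{\min}(\hat{C})}}{p} \leq D_{ii} \leq \sqrt{\frac{p(1-\alpha)}{\lambda_{\min}(\hat{C})}}$. -/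
/-!
Write `B = R ⊙ Ĉ` and `m = λ_min(Ĉ)`, so that the scaling equation reads
`d i * (B d) i = 1 - α`. Since `Ĉ - m I` is positive semidefinite, so is
`R ⊙ (Ĉ - m I) = B - m I` (Schur product theorem, `R` has unit diagonal); hence
`m ‖d‖² ≤ dᵀ B d = p (1 - α)`, which bounds every `d i` from above. For the lower bound,
the entries of `B` are at most `1`, so `1 - α ≤ d i * ∑ j, d j`, and Cauchy–Schwarz gives
`(∑ j, d j)² ≤ p ‖d‖² ≤ p² (1 - α) / m`.
-/

open Finset
open scoped MatrixOrder ComplexOrder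

namespace Matrix

theorem setOf_exists_mulVec_eq_smul_eq_spectrum {n K : Type*} [Fintype n] [DecidableEq n]
    [Field K] (A : Matrix n n K) :
    {μ : K | ∃ v : n → K, v ≠ 0 ∧ A *ᵥ v = μ • v} = spectrum K A := by
  ext μ
  rw [Set.mem_ofPred_eq, ← spectrum_toLin', ← Module.End.hasEigenvalue_iff_mem_spectrum]
  constructor
  · rintro ⟨v, hv, hAv⟩
    exact Module.End.hasEigenvalue_of_hasEigenvector ⟨Module.End.mem_eigenspace_iff.mpr hAv, hv⟩
  · intro h
    obtain ⟨v, hv, hne⟩ := h.exists_hasEigenvector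
    exact ⟨v, hne, Module.End.mem_eigenspace_iff.mp hv⟩

section LambdaMin

variable {p : ℕ} {A : Matrix (Fin p) (Fin p) ℝ}

theorem lambdaMin_eq_sInf_spectrum (A : Matrix (Fin p) (Fin p) ℝ) :
    lambdaMin A = sInf (spectrum ℝ A) :=
  congrArg sInf (setOf_exists_mulVec_eq_smul_eq_spectrum A)

theorem IsHermitian.lambdaMin_smul_one_le (hA : A.IsHermitian) : lambdaMin A • 1 ≤ A := by
  rw [← Algebra.algebraMap_eq_smul_one, algebraMap_le_iff_le_spectrum hA.isSelfAdjoint,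
    lambdaMin_eq_sInf_spectrum, hA.spectrum_real_eq_range_eigenvalues]
  exact fun _ hx => csInf_le (Set.finite_range _).bddBelow hx

theorem PosDef.lambdaMin_pos [NeZero p] (hA : A.PosDef) : 0 < lambdaMin A := by
  rw [lambdaMin_eq_sInf_spectrum, hA.isHermitian.spectrum_real_eq_range_eigenvalues]
  obtain ⟨i, hi⟩ :=
    (Set.range_nonempty hA.isHermitian.eigenvalues).csInf_mem (Set.finite_range _)
  exact hi ▸ hA.eigenvalues_pos i

end LambdaMin

theorem hadamard_le_hadamard_left {n 𝕜 : Type*} [RCLike 𝕜] {R B C : Matrix n n 𝕜}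
    (hR : R.PosSemidef) (hBC : B ≤ C) : R ⊙ B ≤ R ⊙ C := by
  rw [le_iff] at hBC ⊢
  convert hR.hadamard hBC using 1
  ext i j
  simp [mul_sub]

variable {n : Type*} [Fintype n]

section DecidableEq

variable [DecidableEq n]

theorem mul_dotProduct_self_le_of_smul_one_le {m : ℝ} {B : Matrix n n ℝ} (h : m • 1 ≤ B)
    (x : n → ℝ) : m * (x ⬝ᵥ x) ≤ x ⬝ᵥ B *ᵥ x := by
  have := (le_iff.mp h).dotProduct_mulVec_nonneg x
  simpa only [star_trivial, sub_mulVec, smul_mulVec, one_mulVec, dotProduct_sub,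
    dotProduct_smul, smul_eq_mul, sub_nonneg] using this

theorem PosSemidef.abs_apply_le_one {M : Matrix n n ℝ} (hM : M.PosSemidef)
    (hdiag : ∀ i, M i i = 1) (i j : n) : |M i j| ≤ 1 := by
  rcases eq_or_ne i j with rfl | -
  · simp [hdiag i]
  have hsymm : M j i = M i j := hM.isHermitian.apply i j
  have hplus := hM.dotProduct_mulVec_nonneg (Pi.single i 1 + Pi.single j 1)
  have hminus := hM.dotProduct_mulVec_nonneg (Pi.single i 1 - Pi.single j 1)
  simp only [star_trivial, mulVec_add, mulVec_sub, mulVec_single, MulOpposite.op_one, one_smul,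
    dotProduct_add, add_dotProduct, dotProduct_sub, sub_dotProduct, single_dotProduct, col_apply,
    hdiag, hsymm, mul_one, one_mul, sub_nonneg, tsub_le_iff_right] at hplus hminus
  rw [abs_le]
  constructor <;> linarith

end DecidableEq

/-- The scaling equation `D B D e = c e` with `D = diag d`. -/
def IsSymmScaling (B : Matrix n n ℝ) (d : n → ℝ) (c : ℝ) : Prop :=
  ∀ i, d i * (B *ᵥ d) i = c

namespace IsSymmScaling

variable {B : Matrix n n ℝ} {d : n → ℝ} {c m : ℝ}

theorem dotProduct_mulVec_eq (hs : IsSymmScaling B d c) :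
    d ⬝ᵥ B *ᵥ d = Fintype.card n * c := by
  simp [dotProduct, hs _]

theorem le_mul_sum (hs : IsSymmScaling B d c) (hd : ∀ i, 0 < d i) (hB1 : ∀ i j, B i j ≤ 1)
    (i : n) : c ≤ d i * ∑ j, d j := by
  rw [← hs i]
  exact mul_le_mul_of_nonneg_left
    (sum_le_sum fun j _ => mul_le_of_le_one_left (hd j).le (hB1 i j)) (hd i).le

variable [DecidableEq n]

theorem dotProduct_self_le (hs : IsSymmScaling B d c) (hB : m • 1 ≤ B) (hm : 0 < m) :
    d ⬝ᵥ d ≤ Fintype.card n * c / m := by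
  rw [le_div_iff₀ hm, mul_comm, ← hs.dotProduct_mulVec_eq]
  exact mul_dotProduct_self_le_of_smul_one_le hB d

theorem apply_le_sqrt (hs : IsSymmScaling B d c) (hB : m • 1 ≤ B) (hm : 0 < m) (i : n) :
    d i ≤ √(Fintype.card n * c / m) := by
  refine (le_abs_self _).trans (Real.abs_le_sqrt ?_)
  calc d i ^ 2 ≤ d ⬝ᵥ d :=
        sq (d i) ▸ single_le_sum (f := fun j => d j * d j) (fun j _ => mul_self_nonneg _)
          (mem_univ i)
    _ ≤ _ := hs.dotProduct_self_le hB hm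

theorem sqrt_le_apply (hs : IsSymmScaling B d c) (hB : m • 1 ≤ B) (hm : 0 < m) (hc : 0 < c)
    (hd : ∀ i, 0 < d i) (hB1 : ∀ i j, B i j ≤ 1) (i : n) :
    √(c * m) / Fintype.card n ≤ d i := by
  set N : ℝ := ((Fintype.card n : ℕ) : ℝ)
  have hN : 0 < N := Nat.cast_pos.mpr (Fintype.card_pos_iff.mpr ⟨i⟩)
  have hsum : (∑ j, d j) ^ 2 ≤ N * (d ⬝ᵥ d) := by
    simpa [dotProduct, sq] using sq_sum_le_card_mul_sum_sq (s := univ) (f := d)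
  have hcm : c * (c * m) ≤ c * (d i * N) ^ 2 :=
    calc c * (c * m) = m * c ^ 2 := by ring
      _ ≤ m * (d i * ∑ j, d j) ^ 2 := by gcongr; exact hs.le_mul_sum hd hB1 i
      _ = d i ^ 2 * (m * (∑ j, d j) ^ 2) := by ring
      _ ≤ d i ^ 2 * (m * (N * (N * c / m))) := by
          gcongr; exact hsum.trans (by gcongr; exact hs.dotProduct_self_le hB hm)
      _ = c * (d i * N) ^ 2 := by field_simp
  rw [div_le_iff₀ hN, Real.sqrt_le_iff]
  exact ⟨(mul_pos (hd i) hN).le, le_of_mul_le_mul_left hcm hc⟩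

end IsSymmScaling

end Matrix

open Matrix

theorem stmt_6 {p : ℕ} (hp : 0 < p) (C R : Matrix (Fin p) (Fin p) ℝ)
    (hC : C.PosDef) (hCd : ∀ i, C i i = 1)
    (hR : R.PosDef) (hRd : ∀ i, R i i = 1)
    (α : ℝ) (hα : α < 1)
    (A : Matrix (Fin p) (Fin p) ℝ) (hA : A = (1 / (1 - α)) • Matrix.hadamard R C)
    (d : Fin p → ℝ) (hd : ∀ i, 0 < d i)
    (hscal : ∀ i, d i * ∑ j, A i j * d j = 1) :
    ∀ i, Real.sqrt ((1 - α) * lambdaMin C) / p ≤ d i ∧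
      d i ≤ Real.sqrt (p * (1 - α) / lambdaMin C) := by
  have : NeZero p := ⟨hp.ne'⟩
  have h1α : 0 < 1 - α := sub_pos.mpr hα
  have hscaling : (R ⊙ C).IsSymmScaling d (1 - α) := fun i => by
    have h := hscal i
    simp only [hA, Matrix.smul_apply, smul_eq_mul, mul_assoc, ← mul_sum] at h
    field_simp at h
    exact h
  have hB : lambdaMin C • 1 ≤ R ⊙ C :=
    calc lambdaMin C • 1 = R ⊙ (lambdaMin C • 1) := by
          rw [hadamard_smul, hadamard_one_eq_one_iff.mpr (funext hRd)]
      _ ≤ R ⊙ C := hadamard_le_hadamard_left hR.posSemidef hC.isHermitian.lambdaMin_smul_one_le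
  have hB1 (i j : Fin p) : (R ⊙ C) i j ≤ 1 :=
    calc (R ⊙ C) i j ≤ |R i j| * |C i j| := (le_abs_self _).trans (abs_mul _ _).le
      _ ≤ 1 := mul_le_one₀ (hR.posSemidef.abs_apply_le_one hRd i j) (abs_nonneg _)
        (hC.posSemidef.abs_apply_le_one hCd i j)
  have hm := hC.lambdaMin_pos
  intro i
  exact ⟨by simpa only [Fintype.card_fin] using hscaling.sqrt_le_apply hB hm h1α hd hB1 i,
    by simpa only [Fintype.card_fin] using hscaling.apply_le_sqrt hB hm i⟩
end

section
/- Let $\hat{C}$ be a $p\times p$ symmetric matrix with unit diagonal such that $\hat{C} \neq I_p$, i.e., $\hat{C}_{ij} \neq 0$ for some $i \neq j$. Then the function $f(R, D) = -\log\det(R) - 2(1-\alpha)\log\det(D) + \operatorname{tr}(RD\hat{C}D)$, defined for $R$ positive definite with unit diagonal and $D$ diagonal with positive entries, is not convex on its (convex) domain, for any $\alpha < 1$. -/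
/-!
Let `E = symmSingle i j` for an off-diagonal position with `c = C i j ≠ 0`, and let `μ = ±1/2`
have the sign opposite to `c`. On the pairs `(1 + μ • E, t • 1)` the objective equals
`-log (1 - μ²) - 2 (1 - α) p log t + t² (p + 2 μ c)`. Comparing the midpoint `(1, d • 1)` of
`(1 + μ • E, (d + 1) • 1)` and `(1 - μ • E, (d - 1) • 1)` with the mean of the endpoint values,
the coupling term `2 μ c t²` contributes `4 μ c d < 0`, linear in `d`, while the remaining terms
contribute a bounded amount. For `d` large the midpoint value exceeds the mean.
-/

open Matrix

namespace Matrix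

variable {n R : Type*} [DecidableEq n] [CommRing R]

def symmSingle (i j : n) : Matrix n n R := single i j 1 + single j i 1

theorem isSymm_symmSingle (i j : n) : (symmSingle i j : Matrix n n R).IsSymm := by
  simp [IsSymm, symmSingle, add_comm]

theorem one_add_smul_symmSingle_apply_self {i j : n} (hij : i ≠ j) (μ : R) (k : n) :
    (1 + μ • symmSingle i j : Matrix n n R) k k = 1 := by
  have : ¬(i = k ∧ j = k) := fun h => hij (h.1.trans h.2.symm)
  simp [symmSingle, this, and_comm]

variable [Fintype n]

theorem dotProduct_symmSingle_mulVec (i j : n) (x : n → R) :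
    x ⬝ᵥ (symmSingle i j *ᵥ x) = 2 * x i * x j := by
  simp only [symmSingle, add_mulVec, single_mulVec_eq, one_mul, dotProduct_add, dotProduct_smul,
    dotProduct_single, mul_one, smul_eq_mul]
  ring

theorem trace_symmSingle_mul (i j : n) (C : Matrix n n R) :
    (symmSingle i j * C).trace = C j i + C i j := by
  simp [symmSingle, add_mul, trace_single_mul]

theorem det_one_add_smul_symmSingle {i j : n} (hij : i ≠ j) (μ : R) :
    (1 + μ • symmSingle i j : Matrix n n R).det = 1 - μ ^ 2 := by
  -- `μ • symmSingle i j = A * B` has rank two, and `det (1 + A * B) = det (1 + B * A)`.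
  let A : Matrix n (Fin 2) R := (of ![Pi.single i 1, Pi.single j 1])ᵀ
  let B : Matrix (Fin 2) n R := of ![Pi.single j μ, Pi.single i μ]
  have hAB : μ • symmSingle i j = A * B := by
    ext k l
    simp only [symmSingle, smul_apply, add_apply, single_apply, smul_eq_mul, mul_apply,
      transpose_apply, of_apply, cons_val', Pi.single_apply, cons_val_fin_one, Fin.sum_univ_two,
      Fin.isValue, cons_val_zero, mul_ite, ite_mul, one_mul, zero_mul, mul_zero, cons_val_one, A, B]
    grind
  have hBA : B * A = !![0, μ; μ, 0] := by
    ext a b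
    fin_cases a <;> fin_cases b <;> simp [A, B, mul_apply', hij, hij.symm]
  rw [hAB, det_one_add_mul_comm, hBA, det_fin_two]
  simp [sq]

theorem posDef_one_add_smul_symmSingle {i j : n} (hij : i ≠ j) {μ : ℝ} (hμ : |μ| < 1) :
    (1 + μ • symmSingle i j : Matrix n n ℝ).PosDef := by
  refine .of_dotProduct_mulVec_pos ?_ fun x hx => ?_
  · exact isHermitian_iff_isSymm.2 (isSymm_one.add ((isSymm_symmSingle i j).smul μ))
  have hquad : star x ⬝ᵥ ((1 + μ • symmSingle i j) *ᵥ x) = x ⬝ᵥ x + μ * (2 * x i * x j) := by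
    simp [add_mulVec, smul_mulVec, dotProduct_symmSingle_mulVec]
  have hpos : 0 < x ⬝ᵥ x := by simpa using dotProduct_star_self_pos_iff.2 hx
  have hpair : x i ^ 2 + x j ^ 2 ≤ x ⬝ᵥ x := by
    simpa [dotProduct, sq, Finset.sum_pair hij] using
      Finset.sum_le_sum_of_subset_of_nonneg (Finset.subset_univ {i, j})
        fun k _ _ => mul_self_nonneg (x k)
  rw [hquad]
  have hgap : 0 < (1 - |μ|) * x ⬝ᵥ x := mul_pos (sub_pos.2 hμ) hpos
  rcases le_total 0 μ with hμ0 | hμ0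
  · rw [abs_of_nonneg hμ0] at hgap
    linarith [mul_nonneg hμ0 (sub_nonneg.2 hpair), mul_nonneg hμ0 (sq_nonneg (x i + x j))]
  · rw [abs_of_nonpos hμ0] at hgap
    linarith [mul_nonneg (neg_nonneg.2 hμ0) (sub_nonneg.2 hpair),
      mul_nonneg (neg_nonneg.2 hμ0) (sq_nonneg (x i - x j))]

end Matrix

open Real Filter

section CorrelationObjective

variable {n : Type*} [DecidableEq n]

theorem midpoint_one_add_smul_symmSingle (i j : n) (μ d : ℝ) :
    (1 / 2 : ℝ) • ((1 : Matrix n n ℝ) + μ • symmSingle i j, fun _ => d + 1)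
      + (1 / 2 : ℝ) • (1 + (-μ) • symmSingle i j, fun _ => d - 1)
      = (1 + (0 : ℝ) • symmSingle i j, fun (_ : n) => d) := by
  refine Prod.ext ?_ (funext fun _ => ?_)
  · simp only [Prod.fst_add, Prod.smul_fst]
    module
  · simp only [Prod.snd_add, Prod.smul_snd, Pi.add_apply, Pi.smul_apply, smul_eq_mul]
    ring

variable [Fintype n]

def corrDomain : Set (Matrix n n ℝ × (n → ℝ)) :=
  {Rd | Rd.1.PosDef ∧ (∀ i, Rd.1 i i = 1) ∧ (∀ i, 0 < Rd.2 i)}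

noncomputable def corrObjective (C : Matrix n n ℝ) (α : ℝ) (Rd : Matrix n n ℝ × (n → ℝ)) : ℝ :=
  -Real.log Rd.1.det - 2 * (1 - α) * Real.log (∏ i, Rd.2 i)
    + Matrix.trace (Rd.1 * Matrix.diagonal Rd.2 * C * Matrix.diagonal Rd.2)

noncomputable def sliceObjective (N u c μ t : ℝ) : ℝ :=
  -Real.log (1 - μ ^ 2) - 2 * u * (N * Real.log t) + t ^ 2 * (N + 2 * μ * c)

theorem one_add_smul_symmSingle_mem_corrDomain {i j : n} (hij : i ≠ j) {μ t : ℝ}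
    (hμ : |μ| < 1) (ht : 0 < t) :
    (1 + μ • symmSingle i j, fun _ => t) ∈ (corrDomain : Set (Matrix n n ℝ × (n → ℝ))) :=
  ⟨posDef_one_add_smul_symmSingle hij hμ, one_add_smul_symmSingle_apply_self hij μ,
    fun _ => ht⟩

theorem corrObjective_one_add_smul_symmSingle {C : Matrix n n ℝ} (hC : C.IsSymm)
    (hCd : ∀ k, C k k = 1) (α : ℝ) {i j : n} (hij : i ≠ j) (μ t : ℝ) :
    corrObjective C α (1 + μ • symmSingle i j, fun _ => t)
      = sliceObjective (Fintype.card n) (1 - α) (C i j) μ t := by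
  have htrC : C.trace = Fintype.card n := by simp [trace, hCd]
  simp only [corrObjective, sliceObjective, det_one_add_smul_symmSingle hij,
    Finset.prod_const, Finset.card_univ, Real.log_pow, ← smul_one_eq_diagonal]
  simp only [Algebra.mul_smul_comm, mul_one, smul_add, add_mul, Algebra.smul_mul_assoc, one_mul,
    trace_add, trace_smul, htrC, smul_eq_mul, trace_symmSingle_mul, hC.apply i j]
  ring

end CorrelationObjective

theorem two_mul_log_sub_log_add_one_sub_log_sub_one_le {d : ℝ} (hd : 2 ≤ d) :
    2 * log d - log (d + 1) - log (d - 1) ≤ 1 / 3 := by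
  have hd2 : 0 < d ^ 2 - 1 := by nlinarith
  have hlog : 2 * log d - log (d + 1) - log (d - 1) = log (d ^ 2 / (d ^ 2 - 1)) := by
    rw [log_div (by positivity) hd2.ne', log_pow, show d ^ 2 - 1 = (d + 1) * (d - 1) by ring,
      log_mul (by linarith) (by linarith)]
    push_cast
    ring
  rw [hlog]
  calc log (d ^ 2 / (d ^ 2 - 1)) ≤ d ^ 2 / (d ^ 2 - 1) - 1 := log_le_sub_one_of_pos (by positivity)
    _ = 1 / (d ^ 2 - 1) := by field_simp; ring
    _ ≤ 1 / 3 := by gcongr; nlinarith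

theorem sliceObjective_midpoint_gap {N u c μ d : ℝ} (hN : 0 ≤ N) (hu : 0 ≤ u) (hd : 2 ≤ d)
    (hlarge : -log (1 - μ ^ 2) + (1 + u) * N < -4 * μ * c * d) :
    (sliceObjective N u c μ (d + 1) + sliceObjective N u c (-μ) (d - 1)) / 2
      < sliceObjective N u c 0 d := by
  have hlog := mul_le_mul_of_nonneg_left (two_mul_log_sub_log_add_one_sub_log_sub_one_le hd)
    (mul_nonneg hu hN)
  simp only [sliceObjective, neg_sq, zero_pow two_ne_zero, sub_zero, log_one]
  linarith [mul_nonneg hu hN]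

theorem stmt_9 {p : ℕ} (C : Matrix (Fin p) (Fin p) ℝ)
    (hC : C.IsSymm) (hCd : ∀ i, C i i = 1)
    (hCne : ∃ i j, i ≠ j ∧ C i j ≠ 0)
    (α : ℝ) (hα : α < 1) :
    ¬ ConvexOn ℝ
      {Rd : Matrix (Fin p) (Fin p) ℝ × (Fin p → ℝ) |
        Rd.1.PosDef ∧ (∀ i, Rd.1 i i = 1) ∧ (∀ i, 0 < Rd.2 i)}
      (fun Rd =>
        -Real.log Rd.1.det - 2 * (1 - α) * Real.log (∏ i, Rd.2 i)
          + Matrix.trace (Rd.1 * Matrix.diagonal Rd.2 * C * Matrix.diagonal Rd.2)) := by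
  change ¬ ConvexOn ℝ corrDomain (corrObjective C α)
  obtain ⟨i, j, hij, hc⟩ := hCne
  obtain ⟨μ, hμ, hμc⟩ : ∃ μ : ℝ, |μ| = 1 / 2 ∧ μ * C i j < 0 := by
    rcases hc.lt_or_gt with hc | hc
    · exact ⟨1 / 2, by norm_num, by linarith⟩
    · exact ⟨-1 / 2, by norm_num, by linarith⟩
  obtain ⟨d, hd, hlarge⟩ := ((eventually_ge_atTop 2).and
    ((tendsto_id.const_mul_atTop (by linarith : 0 < -4 * μ * C i j)).eventually_gt_atTop
      (-log (1 - μ ^ 2) + (1 + (1 - α)) * Fintype.card (Fin p)))).exists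
  rintro ⟨-, hconv⟩
  have hmid := hconv
    (one_add_smul_symmSingle_mem_corrDomain hij (by linarith) (by linarith : (0 : ℝ) < d + 1))
    (one_add_smul_symmSingle_mem_corrDomain hij (by rw [abs_neg]; linarith)
      (by linarith : (0 : ℝ) < d - 1))
    (by norm_num : (0 : ℝ) ≤ 1 / 2) (by norm_num : (0 : ℝ) ≤ 1 / 2) (by norm_num)
  rw [midpoint_one_add_smul_symmSingle] at hmid
  simp only [corrObjective_one_add_smul_symmSingle hC hCd α hij, smul_eq_mul] at hmid
  linarith [sliceObjective_midpoint_gap (Nat.cast_nonneg _) (by linarith : 0 ≤ 1 - α) hd hlarge]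
end

section
/- Fix $\alpha < 1$ and $\lambda \geq 0$, and let $\hat{C}$ be a $p\times p$ symmetric matrix with unit diagonal. For each fixed diagonal matrix $D$ with positive entries, the map $R \mapsto -\log\det(R) - 2(1-\alpha)\log\det(D) + \operatorname{tr}(\hat{C}DRD) + \lambda\sum_{i\neq j}|R_{ij}|$ is strictly convex on the set of positive definite matrices with unit diagonal. Moreover, if $\hat{C}$ is additionally positive semidefinite, then for each fixed positive definite $R$ with unit diagonal, the map $D \mapsto$ (same expression) is strictly convex on the set of diagonal matrices with positive entries. Hence the objective is strictly biconvex. -/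
/-!
In each variable the objective is one strictly convex term plus convex ones.

In `R`: `-log det` is strictly convex on positive definite matrices. Writing `A = Sᴴ S` and
`B = Sᴴ M S` reduces this to the pair `1, M`, where
`log det (a • 1 + b • M) = ∑ log (a + b μᵢ) ≥ b ∑ log μᵢ` over the eigenvalues `μᵢ` of `M`,
strictly unless `M = 1`. The trace term is linear in `R` and the penalty is convex.

In `d`: `log det (diagonal d) = ∑ log dᵢ` is strictly concave, and
`tr (C D R D) = dᵀ (C ⊙ Rᵀ) d` is a positive semidefinite quadratic form by the Schur product
theorem.
-/

open Matrix
open scoped ComplexOrder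

lemma StrictConcaveOn.const_mul {E : Type*} [AddCommMonoid E] [Module ℝ E] {s : Set E}
    {f : E → ℝ} (hf : StrictConcaveOn ℝ s f) {c : ℝ} (hc : 0 < c) :
    StrictConcaveOn ℝ s (fun x => c * f x) := by
  refine ⟨hf.1, fun x hx y hy hxy a b ha hb hab => ?_⟩
  have h := mul_lt_mul_of_pos_left (hf.2 hx hy hxy ha hb hab) hc
  simp only [smul_eq_mul] at h ⊢
  linarith

lemma StrictConcaveOn.pi_sum {ι : Type*} [Fintype ι] {s : Set ℝ} {f : ι → ℝ → ℝ}
    (hf : ∀ i, StrictConcaveOn ℝ s (f i)) :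
    StrictConcaveOn ℝ (Set.univ.pi fun _ => s) (fun x => ∑ i, f i (x i)) := by
  refine ⟨convex_pi fun i _ => (hf i).1, fun x hx y hy hxy a b ha hb hab => ?_⟩
  obtain ⟨i₀, hi₀⟩ := Function.ne_iff.1 hxy
  simp only [Set.mem_univ_pi] at hx hy
  simp only [smul_eq_mul, Finset.mul_sum, ← Finset.sum_add_distrib, Pi.add_apply, Pi.smul_apply]
  refine Finset.sum_lt_sum (fun i _ => ?_) ⟨i₀, Finset.mem_univ _, ?_⟩
  · simpa using (hf i).concaveOn.2 (hx i) (hy i) ha.le hb.le hab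
  · simpa using (hf i₀).2 (hx i₀) (hy i₀) hi₀ ha hb hab

namespace Matrix

variable {𝕜 n : Type*} [RCLike 𝕜]

lemma convex_setOf_posDef : Convex ℝ {A : Matrix n n 𝕜 | A.PosDef} := by
  intro A hA B hB a b ha hb hab
  rcases ha.eq_or_lt with rfl | ha
  · simpa [show b = 1 by linarith] using hB
  · exact (hA.smul ha).add_posSemidef (hB.posSemidef.smul hb)

lemma convex_setOf_posDef_and_diag_eq_one :
    Convex ℝ {A : Matrix n n 𝕜 | A.PosDef ∧ ∀ i, A i i = 1} :=
  convex_setOf_posDef.inter fun A hA B hB a b _ _ hab i => by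
    simp [hA i, hB i, ← add_smul, hab]

variable [Fintype n] [DecidableEq n]

lemma IsHermitian.det_cfc {M : Matrix n n 𝕜} (hM : M.IsHermitian) (f : ℝ → ℝ) :
    (cfc f M).det = ∏ i, (f (hM.eigenvalues i) : 𝕜) := by
  rw [hM.cfc_eq, IsHermitian.cfc, Unitary.conjStarAlgAut_apply, det_mul, det_mul, mul_comm,
    ← mul_assoc, ← det_mul]
  simp

lemma IsHermitian.smul_one_add_smul_eq_cfc {M : Matrix n n 𝕜} (hM : M.IsHermitian) (a b : ℝ) :
    a • (1 : Matrix n n 𝕜) + b • M = cfc (fun x => a + b * x) M := by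
  rw [cfc_add .., cfc_const a M, cfc_const_mul .., cfc_id' ℝ M, Algebra.algebraMap_eq_smul_one]

lemma IsHermitian.eq_one_of_eigenvalues_eq_one {M : Matrix n n 𝕜} (hM : M.IsHermitian)
    (h : ∀ i, hM.eigenvalues i = 1) : M = 1 := by
  rw [← cfc_id' ℝ M, ← cfc_const_one ℝ M]
  refine cfc_congr fun x hx => ?_
  obtain ⟨i, rfl⟩ := hM.spectrum_real_eq_range_eigenvalues ▸ hx
  exact h i

open scoped MatrixOrder in
lemma PosDef.exists_eq_conjTranspose_mul_mul {A B : Matrix n n 𝕜} (hA : A.PosDef)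
    (hB : B.PosDef) :
    ∃ S M : Matrix n n 𝕜, IsUnit S.det ∧ M.PosDef ∧ A = Sᴴ * S ∧ B = Sᴴ * M * S := by
  obtain ⟨S, rfl⟩ := CStarAlgebra.nonneg_iff_eq_star_mul_self.mp hA.posSemidef.nonneg
  have hS : IsUnit S.det := by
    have h := hA.det_pos.ne'
    rw [det_mul] at h
    exact (right_ne_zero_of_mul h).isUnit
  refine ⟨S, (S⁻¹)ᴴ * B * S⁻¹, hS, hB.conjTranspose_mul_mul_same ?_, rfl, ?_⟩
  · exact mulVec_injective_iff_isUnit.2 (isUnit_nonsing_inv_iff.2 ((isUnit_iff_isUnit_det S).2 hS))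
  · have hSH : IsUnit Sᴴ.det := by simpa [det_conjTranspose] using hS.star
    simp only [← mul_assoc]
    rw [conjTranspose_nonsing_inv, mul_nonsing_inv _ hSH, one_mul,
      nonsing_inv_mul_cancel_right _ _ hS]

lemma det_conjTranspose_mul_mul (S M : Matrix n n ℝ) : (Sᴴ * M * S).det = S.det ^ 2 * M.det := by
  rw [det_mul, det_mul, det_conjTranspose, star_trivial]
  ring

lemma PosDef.mul_log_det_lt_log_det_smul_one_add_smul {M : Matrix n n ℝ} (hM : M.PosDef)
    (hM1 : M ≠ 1) {a b : ℝ} (ha : 0 < a) (hb : 0 < b) (hab : a + b = 1) :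
    b * Real.log M.det < Real.log (a • (1 : Matrix n n ℝ) + b • M).det := by
  have hμ := hM.eigenvalues_pos
  obtain ⟨i₀, hi₀⟩ : ∃ i, hM.1.eigenvalues i ≠ 1 := by
    by_contra! h
    exact hM1 (hM.1.eq_one_of_eigenvalues_eq_one h)
  have hlt {i} (hi : hM.1.eigenvalues i ≠ 1) :
      b * Real.log (hM.1.eigenvalues i) < Real.log (a + b * hM.1.eigenvalues i) := by
    simpa using strictConcaveOn_log_Ioi.2 (Set.mem_Ioi.2 one_pos) (hμ i) hi.symm ha hb hab
  have hle (i) : b * Real.log (hM.1.eigenvalues i) ≤ Real.log (a + b * hM.1.eigenvalues i) := by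
    rcases eq_or_ne (hM.1.eigenvalues i) 1 with h | h
    · simp [h, hab]
    · exact (hlt h).le
  rw [hM.1.smul_one_add_smul_eq_cfc, hM.1.det_cfc, hM.1.det_eq_prod_eigenvalues]
  simp only [RCLike.ofReal_real_eq_id, id]
  rw [Real.log_prod fun i _ => (hμ i).ne', Real.log_prod fun i _ => by have := hμ i; positivity,
    Finset.mul_sum]
  exact Finset.sum_lt_sum (fun i _ => hle i) ⟨i₀, Finset.mem_univ _, hlt hi₀⟩

theorem strictConcaveOn_log_det :
    StrictConcaveOn ℝ {A : Matrix n n ℝ | A.PosDef} (fun A => Real.log A.det) := by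
  refine ⟨convex_setOf_posDef, fun A hA B hB hAB a b ha hb hab => ?_⟩
  obtain ⟨S, M, hS, hM, rfl, rfl⟩ := hA.exists_eq_conjTranspose_mul_mul hB
  have hM1 : M ≠ 1 := by rintro rfl; simp at hAB
  have hcomb : a • (Sᴴ * S) + b • (Sᴴ * M * S) = Sᴴ * (a • 1 + b • M) * S := by
    simp only [mul_add, add_mul, Matrix.mul_smul, Matrix.smul_mul, mul_one]
  have hS2 : S.det ^ 2 ≠ 0 := pow_ne_zero 2 hS.ne_zero
  have hpos : (a • (1 : Matrix n n ℝ) + b • M).PosDef := (PosDef.one.smul ha).add (hM.smul hb)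
  have hA' : (Sᴴ * S).det = S.det ^ 2 := by simpa using det_conjTranspose_mul_mul S 1
  simp only [smul_eq_mul, hcomb]
  rw [hA', det_conjTranspose_mul_mul, det_conjTranspose_mul_mul, Real.log_mul hS2 hM.det_pos.ne',
    Real.log_mul hS2 hpos.det_pos.ne']
  linear_combination hM.mul_log_det_lt_log_det_smul_one_add_smul hM1 ha hb hab +
    Real.log (S.det ^ 2) * hab

theorem strictConcaveOn_log_det_diagonal :
    StrictConcaveOn ℝ {d : n → ℝ | ∀ i, 0 < d i} (fun d => Real.log (diagonal d).det) := by
  have h := StrictConcaveOn.pi_sum (ι := n) fun _ => strictConcaveOn_log_Ioi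
  rw [show (Set.univ.pi fun _ : n => Set.Ioi (0 : ℝ)) = {d | ∀ i, 0 < d i} by ext; simp] at h
  exact h.congr fun d hd => by rw [det_diagonal, Real.log_prod fun i _ => (hd i).ne']

lemma convexOn_trace_mul_mul (P Q : Matrix n n ℝ) :
    ConvexOn ℝ Set.univ (fun R => (P * R * Q).trace) :=
  ⟨convex_univ, fun R _ S _ a b _ _ _ => le_of_eq <| by
    simp [mul_add, add_mul, trace_add, trace_smul]⟩

lemma convexOn_sum_abs_offDiag :
    ConvexOn ℝ Set.univ (fun R : Matrix n n ℝ => ∑ i, ∑ j, if i = j then 0 else |R i j|) := by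
  refine ⟨convex_univ, fun R _ S _ a b ha hb _ => ?_⟩
  simp only [smul_eq_mul, Finset.mul_sum, ← Finset.sum_add_distrib]
  gcongr with i _ j _
  split_ifs
  · simp
  · simpa [abs_mul, abs_of_nonneg ha, abs_of_nonneg hb] using abs_add_le (a * R i j) (b * S i j)

omit [DecidableEq n] in
lemma PosSemidef.convexOn_dotProduct_mulVec {A : Matrix n n ℝ} (hA : A.PosSemidef) :
    ConvexOn ℝ Set.univ (fun x => x ⬝ᵥ A *ᵥ x) := by
  refine ⟨convex_univ, fun x _ y _ a b ha hb hab => ?_⟩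
  have h := hA.dotProduct_mulVec_nonneg (x - y)
  simp only [star_trivial] at h
  obtain rfl : b = 1 - a := by linarith
  simp only [smul_eq_mul, mulVec_add, mulVec_smul, mulVec_sub, dotProduct_add, add_dotProduct,
    dotProduct_smul, smul_dotProduct, dotProduct_sub, sub_dotProduct] at h ⊢
  nlinarith [mul_nonneg ha hb]

lemma trace_mul_diagonal_mul_mul_diagonal {R : Type*} [CommSemiring R] (C M : Matrix n n R)
    (d : n → R) : (C * diagonal d * M * diagonal d).trace = d ⬝ᵥ (C ⊙ Mᵀ) *ᵥ d := by
  simp only [trace, diag, mul_diagonal]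
  simp only [mul_apply, dotProduct, mulVec, hadamard_apply, transpose_apply, Finset.mul_sum,
    Finset.sum_mul, diagonal_apply, mul_ite, mul_zero, Finset.sum_ite_eq', Finset.mem_univ, if_true]
  refine Finset.sum_congr rfl fun i _ => Finset.sum_congr rfl fun j _ => ?_
  ring

end Matrix

theorem stmt_10_general {p : ℕ} (α l : ℝ) (hα : α < 1) (hl : 0 ≤ l)
    (C : Matrix (Fin p) (Fin p) ℝ) :
    (∀ d : Fin p → ℝ, (∀ i, 0 < d i) →
      StrictConvexOn ℝ
        {R : Matrix (Fin p) (Fin p) ℝ | R.PosDef ∧ ∀ i, R i i = 1}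
        (fun R =>
          -Real.log R.det - 2 * (1 - α) * Real.log ((Matrix.diagonal d).det)
            + Matrix.trace (C * Matrix.diagonal d * R * Matrix.diagonal d)
            + l * ∑ i, ∑ j, (if i = j then 0 else |R i j|))) ∧
    (C.PosSemidef →
      ∀ R : Matrix (Fin p) (Fin p) ℝ, R.PosDef → (∀ i, R i i = 1) →
        StrictConvexOn ℝ
          {d : Fin p → ℝ | ∀ i, 0 < d i}
          (fun d =>
            -Real.log R.det - 2 * (1 - α) * Real.log ((Matrix.diagonal d).det)
              + Matrix.trace (C * Matrix.diagonal d * R * Matrix.diagonal d)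
              + l * ∑ i, ∑ j, (if i = j then 0 else |R i j|))) := by
  constructor
  · intro d _
    have hs := convex_setOf_posDef_and_diag_eq_one (𝕜 := ℝ) (n := Fin p)
    have hlog := (strictConcaveOn_log_det.subset (fun R hR => hR.1) hs).neg
    have htr := (convexOn_trace_mul_mul (C * diagonal d) (diagonal d)).subset (Set.subset_univ _) hs
    have hpen := ((convexOn_sum_abs_offDiag (n := Fin p)).subset (Set.subset_univ _) hs).smul hl
    refine (((hlog.add_convexOn htr).add_convexOn hpen).add_const
      (-(2 * (1 - α) * Real.log (diagonal d).det))).congr fun R _ => ?_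
    simp only [Pi.add_apply, Pi.neg_apply, smul_eq_mul]
    ring
  · intro hC R hR _
    have hlog := ((strictConcaveOn_log_det_diagonal (n := Fin p)).const_mul (by linarith : 0 < 2 * (1 - α))).neg
    have hquad : ConvexOn ℝ {d : Fin p → ℝ | ∀ i, 0 < d i}
        (fun d => (C * diagonal d * R * diagonal d).trace) := by
      simp only [trace_mul_diagonal_mul_mul_diagonal]
      exact (hC.hadamard hR.posSemidef.transpose).convexOn_dotProduct_mulVec.subset
        (Set.subset_univ _) hlog.1
    refine ((hlog.add_convexOn hquad).add_const
      (-Real.log R.det + l * ∑ i, ∑ j, if i = j then 0 else |R i j|)).congr fun d _ => ?_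
    simp only [Pi.add_apply, Pi.neg_apply]
    ring

theorem stmt_10 {p : ℕ} (α l : ℝ) (hα : α < 1) (hl : 0 ≤ l)
    (C : Matrix (Fin p) (Fin p) ℝ) (hC : C.IsSymm) (hCd : ∀ i, C i i = 1) :
    (∀ d : Fin p → ℝ, (∀ i, 0 < d i) →
      StrictConvexOn ℝ
        {R : Matrix (Fin p) (Fin p) ℝ | R.PosDef ∧ ∀ i, R i i = 1}
        (fun R =>
          -Real.log R.det - 2 * (1 - α) * Real.log ((Matrix.diagonal d).det)
            + Matrix.trace (C * Matrix.diagonal d * R * Matrix.diagonal d)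
            + l * ∑ i, ∑ j, (if i = j then 0 else |R i j|))) ∧
    (C.PosSemidef →
      ∀ R : Matrix (Fin p) (Fin p) ℝ, R.PosDef → (∀ i, R i i = 1) →
        StrictConvexOn ℝ
          {d : Fin p → ℝ | ∀ i, 0 < d i}
          (fun d =>
            -Real.log R.det - 2 * (1 - α) * Real.log ((Matrix.diagonal d).det)
              + Matrix.trace (C * Matrix.diagonal d * R * Matrix.diagonal d)
              + l * ∑ i, ∑ j, (if i = j then 0 else |R i j|))) :=
  stmt_10_general α l hα hl C
end

section
/- Let $R$ be a $p\times p$ symmetric matrix, $I_{p^2}$ the identity on $\mathbb{R}^{p^2} \cong \mathbb{R}^{p\times p}$ (via vectorization), and $\mathrm{P}_{\mathrm{diag}}$ the orthogonal projection onto vectorized diagonal matrices. Define $\tilde{M}_R = I_{p^2} - \frac{1}{2}\mathrm{P}_{\mathrm{diag}}((I_p \otimes R) + (R \otimes I_p)) + \mathrm{P}_{\mathrm{diag}}$ and $N_R = \mathrm{P}_{\mathrm{diag}}^\perp + \frac{1}{2}\mathrm{P}_{\mathrm{diag}}((I_p \otimes R) + (R \otimes I_p))$, where $\mathrm{P}_{\mathrm{diag}}^\perp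 = I_{p^2} - \mathrm{P}_{\mathrm{diag}}$. If $R$ has unit diagonal, then $N_R \tilde{M}_R = I_{p^2}$; in particular $\tilde{M}_R$ is invertible with inverse $N_R$. -/
open Matrix Kronecker

/-- Orthogonal projection onto (vectorized) diagonal matrices, as a `p² × p²` matrix
indexed by pairs. -/
def Pdiag (p : ℕ) : Matrix (Fin p × Fin p) (Fin p × Fin p) ℝ :=
  Matrix.diagonal (fun ij => if ij.1 = ij.2 then 1 else 0)

theorem stmt_16 {p : ℕ} (R : Matrix (Fin p) (Fin p) ℝ)
    (hRsymm : R.IsSymm) (hRd : ∀ i, R i i = 1) :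
    let O := (1 : Matrix (Fin p) (Fin p) ℝ) ⊗ₖ R + R ⊗ₖ (1 : Matrix (Fin p) (Fin p) ℝ)
    let Mtilde := (1 : Matrix (Fin p × Fin p) (Fin p × Fin p) ℝ)
      - (1 / 2 : ℝ) • (Pdiag p * O) + Pdiag p
    let N := ((1 : Matrix (Fin p × Fin p) (Fin p × Fin p) ℝ) - Pdiag p)
      + (1 / 2 : ℝ) • (Pdiag p * O)
    N * Mtilde = 1 ∧ Mtilde * N = 1 := by
  intro O Mtilde N
  have key : ∀ A B : Matrix (Fin p × Fin p) (Fin p × Fin p) ℝ,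
      A * A = A → B * B = B → A * B = B → B * A = A →
      ((1 : Matrix (Fin p × Fin p) (Fin p × Fin p) ℝ) - A + B) * (1 - B + A) = 1 := by
    intro A B hA hB hAB hBA
    simp only [mul_sub, sub_mul, mul_add, add_mul, one_mul, mul_one, hA, hB, hAB, hBA]
    abel
  set P := Pdiag p with hPdef
  have hP : P * P = P := by
    have h : (fun ij : Fin p × Fin p => (if ij.1 = ij.2 then (1:ℝ) else 0) *
        (if ij.1 = ij.2 then (1:ℝ) else 0)) = fun ij => if ij.1 = ij.2 then 1 else 0 := by
      funext ij; by_cases h : ij.1 = ij.2 <;> simp [h]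
    rw [hPdef, Pdiag, Matrix.diagonal_mul_diagonal, h]
  have hPOP : P * O * P = (2 : ℝ) • P := by
    ext ⟨i, j⟩ ⟨k, l⟩
    rw [hPdef, Pdiag, Matrix.mul_diagonal, Matrix.diagonal_mul, Matrix.smul_apply,
      Matrix.diagonal_apply, smul_eq_mul]
    by_cases hij : i = j
    · by_cases hkl : k = l
      · subst hij; subst hkl
        by_cases hik : i = k
        · subst hik
          simp [O, Matrix.one_apply, hRd]
          norm_num
        · simp [O, Matrix.one_apply, hik, Prod.ext_iff]
      · have : ¬ ((i, j) = (k, l)) := by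
          simp only [Prod.ext_iff]; rintro ⟨rfl, rfl⟩; exact hkl hij
        simp [hkl, this]
    · simp [hij]
  set Q : Matrix (Fin p × Fin p) (Fin p × Fin p) ℝ := (1 / 2 : ℝ) • (P * O) with hQdef
  have hQP : Q * P = P := by
    rw [hQdef, Matrix.smul_mul, hPOP, smul_smul]
    norm_num
  have hPQ : P * Q = Q := by
    rw [hQdef, Matrix.mul_smul, ← Matrix.mul_assoc, hP]
  have hQQ : Q * Q = Q := by
    nth_rewrite 2 [hQdef]
    rw [Matrix.mul_smul, ← Matrix.mul_assoc, hQP, ← hQdef]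
  constructor
  · show ((1 : Matrix (Fin p × Fin p) (Fin p × Fin p) ℝ) - P + Q) * (1 - Q + P) = 1
    exact key P Q hP hQQ hPQ hQP
  · show ((1 : Matrix (Fin p × Fin p) (Fin p × Fin p) ℝ) - Q + P) * (1 - P + Q) = 1
    exact key Q P hQQ hP hQP hPQ
end

section
/- Let $p \geq 3$ and consider the $p\times p$ hub precision matrix $K^\ast$ with $K^\ast_{11} = a > 0$, $K^\ast_{ii} = b > 0$ for $i \geq 2$, $K^\ast_{1i} = K^\ast_{i1} = c \neq 0$ for $i \geq 2$, and all other entries zero. Then: (i) $K^\ast$ is positive definite if and only if $(p-1)c^2 < ab$; and (ii) writing $t = c^2/(ab) \in (0, 1/(p-1))$, the quantity $\mathrm{IRR}_{\mathrm{PCG}}(K^\ast) = \frac{|c|}{\sqrt{ab}}(2 - (p-1)\frac{c^2}{ab}) = \sqrt{t}(2 - (p-1)t)$ satisfies $\mathrm{IRR}_{\mathrm{PCG}}(K^\ast) \leq \frac{4\sqrt{2}}{3\sqrt{3}}\frac{1}{\sqrt{p-1}} < 1$. -/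
/-!
With `S` and `Q` the sum and the sum of squares of the non-hub coordinates of `x`, the quadratic
form is `xᵀ K x = a x₀² + 2 c x₀ S + b Q`. Completing the square in `x₀` and Cauchy–Schwarz
`S² ≤ (p - 1) Q` give `a · xᵀ K x ≥ (a x₀ + c S)² + (a b - (p - 1) c²) Q`, whence positive
definiteness; conversely the test vector `(-(p - 1) c, a, …, a)` has
`xᵀ K x = (p - 1) a (a b - (p - 1) c²)`.

For the bound, `u = (p - 1) c² / (a b)` turns the quantity into `√u (2 - u) / √(p - 1)`, and
`√u (2 - u)` is at most its value `√(32 / 27)` at `u = 2 / 3`, which is less than `√2`.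
-/

open Matrix

/-- The hub precision matrix: hub value `a` at `(0,0)`, `b` on the rest of the
diagonal, `c` on the first row/column off the diagonal, and `0` elsewhere. -/
def hubMatrix (p : ℕ) [NeZero p] (a b c : ℝ) : Matrix (Fin p) (Fin p) ℝ :=
  Matrix.of (fun i j =>
    if i = j then (if i = 0 then a else b)
    else if i = 0 ∨ j = 0 then c else 0)

open Finset

section Hub

variable {p : ℕ} [NeZero p] (a b c : ℝ)

theorem isHermitian_hubMatrix : (hubMatrix p a b c).IsHermitian := by
  ext i j
  by_cases hij : i = j
  · subst hij; simp
  · simp [hubMatrix, hij, Ne.symm hij, or_comm]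

theorem hubMatrix_mulVec_zero (x : Fin p → ℝ) :
    (hubMatrix p a b c *ᵥ x) 0 = a * x 0 + c * ∑ i ∈ univ.erase 0, x i := by
  rw [mulVec, dotProduct, ← add_sum_erase _ _ (mem_univ 0), mul_sum]
  refine congrArg₂ _ (by simp [hubMatrix]) (sum_congr rfl fun j hj => ?_)
  simp [hubMatrix, Ne.symm (ne_of_mem_erase hj)]

theorem hubMatrix_mulVec_of_ne_zero (x : Fin p → ℝ) {i : Fin p} (hi : i ≠ 0) :
    (hubMatrix p a b c *ᵥ x) i = c * x 0 + b * x i := by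
  rw [mulVec, dotProduct, Fintype.sum_eq_add 0 i (Ne.symm hi)]
  · simp [hubMatrix, hi]
  · rintro j ⟨hj0, hji⟩
    simp [hubMatrix, hi, hj0, Ne.symm hji]

theorem dotProduct_hubMatrix_mulVec (x : Fin p → ℝ) :
    x ⬝ᵥ (hubMatrix p a b c *ᵥ x) =
      a * x 0 ^ 2 + 2 * c * x 0 * ∑ i ∈ univ.erase 0, x i + b * ∑ i ∈ univ.erase 0, x i ^ 2 := by
  have hrest : ∑ i ∈ univ.erase 0, x i * (hubMatrix p a b c *ᵥ x) i =
      ∑ i ∈ univ.erase 0, (c * x 0 * x i + b * x i ^ 2) :=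
    sum_congr rfl fun i hi => by rw [hubMatrix_mulVec_of_ne_zero a b c x (ne_of_mem_erase hi)]; ring
  rw [dotProduct, ← add_sum_erase _ _ (mem_univ 0), hubMatrix_mulVec_zero, hrest, sum_add_distrib,
    ← mul_sum, ← mul_sum]
  ring

theorem card_univ_erase_zero : ((univ.erase (0 : Fin p)).card : ℝ) = p - 1 := by
  rw [card_erase_of_mem (mem_univ _), card_univ, Fintype.card_fin,
    Nat.cast_pred (Nat.pos_of_neZero p)]

variable {a b c}

theorem hubMatrix_posDef (ha : 0 < a) (h : ((p : ℝ) - 1) * c ^ 2 < a * b) :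
    (hubMatrix p a b c).PosDef := by
  refine PosDef.of_dotProduct_mulVec_pos (isHermitian_hubMatrix a b c) fun x hx => ?_
  rw [star_trivial, dotProduct_hubMatrix_mulVec]
  set S := ∑ i ∈ univ.erase 0, x i
  set Q := ∑ i ∈ univ.erase 0, x i ^ 2
  have hQ : 0 ≤ Q := sum_nonneg fun i _ => sq_nonneg (x i)
  have hSQ : S ^ 2 ≤ ((p : ℝ) - 1) * Q := card_univ_erase_zero (p := p) ▸ sq_sum_le_card_mul_sum_sq
  -- completing the square in `x 0`
  have key : (a * x 0 + c * S) ^ 2 + (a * b - (p - 1) * c ^ 2) * Q ≤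
      a * (a * x 0 ^ 2 + 2 * c * x 0 * S + b * Q) := by
    nlinarith [mul_le_mul_of_nonneg_left hSQ (sq_nonneg c)]
  refine pos_of_mul_pos_right (lt_of_lt_of_le ?_ key) ha.le
  rcases hQ.lt_or_eq with hQpos | hQzero
  · nlinarith [sub_pos.mpr h]
  · have hrest : ∀ i ∈ univ.erase 0, x i = 0 := fun i hi =>
      pow_eq_zero_iff two_ne_zero |>.mp <| (sum_eq_zero_iff_of_nonneg fun j _ => sq_nonneg (x j)).mp
        hQzero.symm i hi
    have hx0 : x 0 ≠ 0 := fun hx0 => hx <| funext fun i => by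
      by_cases hi : i = 0
      · rwa [hi]
      · exact hrest i (mem_erase.mpr ⟨hi, mem_univ i⟩)
    have hS : S = 0 := sum_eq_zero hrest
    rw [hS, ← hQzero]
    simpa using sq_pos_of_ne_zero (mul_ne_zero ha.ne' hx0)

theorem lt_of_hubMatrix_posDef (hp : 2 ≤ p) (ha : 0 < a) (h : (hubMatrix p a b c).PosDef) :
    ((p : ℝ) - 1) * c ^ 2 < a * b := by
  set v : Fin p → ℝ := fun i => if i = 0 then -(((p : ℝ) - 1) * c) else a
  have hv : ∀ i ∈ univ.erase 0, v i = a := fun i hi => if_neg (ne_of_mem_erase hi)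
  have hv0 : v ≠ 0 := fun hv0 => by
    have h1 : (⟨1, hp⟩ : Fin p) ≠ 0 := Fin.ne_of_val_ne one_ne_zero
    simpa [v, h1, ha.ne'] using congrFun hv0 ⟨1, hp⟩
  have hform := h.dotProduct_mulVec_pos hv0
  have hS : ∑ i ∈ univ.erase 0, v i = ((p : ℝ) - 1) * a := by
    rw [sum_congr rfl hv, sum_const, nsmul_eq_mul, card_univ_erase_zero]
  have hQ : ∑ i ∈ univ.erase 0, v i ^ 2 = ((p : ℝ) - 1) * a ^ 2 := by
    rw [sum_congr rfl fun i hi => by rw [hv i hi], sum_const, nsmul_eq_mul, card_univ_erase_zero]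
  rw [star_trivial, dotProduct_hubMatrix_mulVec, hS, hQ, show v 0 = _ from if_pos rfl] at hform
  have hp1 : (0 : ℝ) < p - 1 := by
    rw [sub_pos, Nat.one_lt_cast]; omega
  nlinarith [mul_pos hp1 ha]

end Hub

open Real

theorem sq_four_mul_sqrt_two_div_three_mul_sqrt_three : (4 * √2 / (3 * √3)) ^ 2 = 32 / 27 := by
  rw [div_pow, mul_pow, mul_pow, sq_sqrt zero_le_two, sq_sqrt zero_le_three]
  norm_num

theorem sqrt_mul_two_sub_le (u : ℝ) : √u * (2 - u) ≤ 4 * √2 / (3 * √3) := by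
  have hC : 0 ≤ 4 * √2 / (3 * √3) := by positivity
  rcases le_or_gt u 0 with hu | hu
  · rw [sqrt_eq_zero_of_nonpos hu, zero_mul]; exact hC
  rcases le_or_gt 2 u with hu2 | hu2
  · exact (mul_nonpos_of_nonneg_of_nonpos (sqrt_nonneg u) (by linarith)).trans hC
  rw [← pow_le_pow_iff_left₀ (by positivity) hC two_ne_zero, mul_pow, sq_sqrt hu.le,
    sq_four_mul_sqrt_two_div_three_mul_sqrt_three]
  -- `32 - 27 u (2 - u)² = (3u - 2)² (8 - 3u)`
  nlinarith [mul_nonneg (sq_nonneg (3 * u - 2)) (by linarith : (0 : ℝ) ≤ 8 - 3 * u)]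

theorem sqrt_mul_two_sub_mul_le {n : ℝ} (hn : 0 < n) (t : ℝ) :
    √t * (2 - n * t) ≤ 4 * √2 / (3 * √3) * (1 / √n) := by
  have hsn : 0 < √n := sqrt_pos.mpr hn
  calc √t * (2 - n * t) = √(n * t) * (2 - n * t) / √n := by
        rw [sqrt_mul hn.le]; field_simp
    _ ≤ 4 * √2 / (3 * √3) / √n := by gcongr; exact sqrt_mul_two_sub_le _
    _ = 4 * √2 / (3 * √3) * (1 / √n) := by rw [mul_one_div]

theorem four_mul_sqrt_two_div_three_mul_sqrt_three_div_sqrt_lt_one {n : ℝ} (hn : 2 ≤ n) :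
    4 * √2 / (3 * √3) * (1 / √n) < 1 := by
  have hsn : 0 < √n := sqrt_pos.mpr (by linarith)
  rw [mul_one_div, div_lt_one hsn, ← pow_lt_pow_iff_left₀ (by positivity) hsn.le two_ne_zero,
    sq_four_mul_sqrt_two_div_three_mul_sqrt_three, sq_sqrt (by linarith)]
  linarith

theorem stmt_19_general {p : ℕ} [NeZero p] (hp : 3 ≤ p) (a b c : ℝ)
    (ha : 0 < a) :
    ((hubMatrix p a b c).PosDef ↔ ((p : ℝ) - 1) * c ^ 2 < a * b) ∧
    (((p : ℝ) - 1) * c ^ 2 < a * b →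
      |c| / Real.sqrt (a * b) * (2 - ((p : ℝ) - 1) * (c ^ 2 / (a * b)))
          ≤ (4 * Real.sqrt 2) / (3 * Real.sqrt 3) * (1 / Real.sqrt ((p : ℝ) - 1)) ∧
        (4 * Real.sqrt 2) / (3 * Real.sqrt 3) * (1 / Real.sqrt ((p : ℝ) - 1)) < 1) := by
  have hn : (2 : ℝ) ≤ p - 1 := by
    have : (3 : ℝ) ≤ p := by exact_mod_cast hp
    linarith
  refine ⟨⟨lt_of_hubMatrix_posDef (by omega) ha, hubMatrix_posDef ha⟩, fun _ =>
    ⟨?_, four_mul_sqrt_two_div_three_mul_sqrt_three_div_sqrt_lt_one hn⟩⟩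
  rw [← sqrt_sq_eq_abs, ← sqrt_div (sq_nonneg c)]
  exact sqrt_mul_two_sub_mul_le (by linarith) _

theorem stmt_19 {p : ℕ} [NeZero p] (hp : 3 ≤ p) (a b c : ℝ)
    (ha : 0 < a) (hb : 0 < b) (hc : c ≠ 0) :
    ((hubMatrix p a b c).PosDef ↔ ((p : ℝ) - 1) * c ^ 2 < a * b) ∧
    (((p : ℝ) - 1) * c ^ 2 < a * b →
      |c| / Real.sqrt (a * b) * (2 - ((p : ℝ) - 1) * (c ^ 2 / (a * b)))
          ≤ (4 * Real.sqrt 2) / (3 * Real.sqrt 3) * (1 / Real.sqrt ((p : ℝ) - 1)) ∧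
        (4 * Real.sqrt 2) / (3 * Real.sqrt 3) * (1 / Real.sqrt ((p : ℝ) - 1)) < 1) :=
  stmt_19_general hp a b c ha
end
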